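/- Let W'' be a binomial random variable with parameters (C(n−1,2), 2/3) and W' an independent binomial random variable with parameters (k(n−k)(n−2)/2, 2/3), where 2 ≤ k ≤ n−2 and n is sufficiently large. Then P(W'' ≥ W') ≤ 2·exp(−n/576). -/

import Mathlib

/-!
Write `a = C(n-1, 2)` and `b = k(n-k)(n-2)/2` for the numbers of trials and `p = 2/3`. If
`W' ≤ W''`, then `W''` lies above the midpoint `c = p(a+b)/2` of the two means or `W'` lies below
it. Bounding the moment generating function of a Bernoulli variable by `e^{p(s+s²)}`, the
exponential Markov inequality at `s = ±(b-a)/(4b)` bounds each event by `exp(-p(b-a)²/(16b))`.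
The gap `b - a ≥ (n-2)(n-3)/2` is quadratic in `n` while `b` is at most cubic, so this exponent
is at least `n/576`.
-/

open MeasureTheory ProbabilityTheory Finset

section Binomial

variable {Ω : Type*} [MeasurableSpace Ω]

def HasBinomialLaw (μ : Measure Ω) (W : Ω → ℕ) (N : ℕ) (p q : ℝ) : Prop :=
  ∀ m : ℕ, μ {ω | W ω = m} = ENNReal.ofReal (N.choose m * p ^ m * q ^ (N - m))

variable {μ : Measure Ω} {W : Ω → ℕ} {N : ℕ} {p q : ℝ}

theorem HasBinomialLaw.measure_le_ofReal_sum_mul (hW : HasBinomialLaw μ W N p q)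
    (hp : 0 ≤ p) (hq : 0 ≤ q) {φ : ℕ → Prop} {g : ℕ → ℝ} (hg0 : ∀ m, 0 ≤ g m)
    (hg1 : ∀ m, φ m → 1 ≤ g m) :
    μ {ω | φ (W ω)} ≤
      ENNReal.ofReal (∑ m ∈ range (N + 1), N.choose m * p ^ m * q ^ (N - m) * g m) := by
  have hcover : {ω | φ (W ω)} ⊆ ⋃ m : ℕ, {ω | W ω = m ∧ φ m} := fun ω hω =>
    Set.mem_iUnion.2 ⟨W ω, rfl, hω⟩
  have hterm : ∀ m : ℕ, μ {ω | W ω = m ∧ φ m} ≤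
      ENNReal.ofReal (N.choose m * p ^ m * q ^ (N - m) * g m) := by
    intro m
    by_cases hm : φ m
    · simp only [hm, and_true, hW m]
      exact ENNReal.ofReal_le_ofReal (le_mul_of_one_le_right (by positivity) (hg1 m hm))
    · simp [hm]
  calc μ {ω | φ (W ω)}
      ≤ ∑' m : ℕ, ENNReal.ofReal (N.choose m * p ^ m * q ^ (N - m) * g m) :=
        (measure_mono hcover).trans ((measure_iUnion_le _).trans (ENNReal.tsum_le_tsum hterm))
    _ = ∑ m ∈ range (N + 1), ENNReal.ofReal (N.choose m * p ^ m * q ^ (N - m) * g m) :=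
        tsum_eq_sum fun m hm => by
          simp [Nat.choose_eq_zero_of_lt (by simpa using hm : N < m)]
    _ = _ := (ENNReal.ofReal_sum_of_nonneg fun m _ => by have := hg0 m; positivity).symm

theorem sum_choose_mul_pow_mul_exp (N : ℕ) (p q s : ℝ) :
    ∑ m ∈ range (N + 1), N.choose m * p ^ m * q ^ (N - m) * Real.exp (s * m) =
      (p * Real.exp s + q) ^ N := by
  rw [add_pow]
  refine sum_congr rfl fun m _ => ?_
  rw [mul_comm s, Real.exp_nat_mul, mul_pow]
  ring

theorem mul_exp_add_le_exp (hp : 0 ≤ p) (hpq : p + q = 1) {s : ℝ} (hs : |s| ≤ 1) :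
    p * Real.exp s + q ≤ Real.exp (p * (s + s ^ 2)) := by
  have hexp : Real.exp s - 1 ≤ s + s ^ 2 := by
    linarith [(abs_le.1 (Real.abs_exp_sub_one_sub_id_le hs)).2]
  calc p * Real.exp s + q = p * (Real.exp s - 1) + 1 := by linear_combination hpq
    _ ≤ p * (s + s ^ 2) + 1 := by gcongr
    _ ≤ Real.exp (p * (s + s ^ 2)) := by linarith [Real.add_one_le_exp (p * (s + s ^ 2))]

/-- Chernoff bound; `s ≥ 0` bounds the upper tail and `s ≤ 0` the lower one. -/
theorem HasBinomialLaw.measure_mul_le_mul_le (hW : HasBinomialLaw μ W N p q)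
    (hp : 0 ≤ p) (hq : 0 ≤ q) (hpq : p + q = 1) (c : ℝ) {s : ℝ} (hs : |s| ≤ 1) :
    μ {ω | s * c ≤ s * W ω} ≤
      ENNReal.ofReal (Real.exp (-(s * c) + N * p * (s + s ^ 2))) := by
  refine (hW.measure_le_ofReal_sum_mul hp hq (φ := fun m => s * c ≤ s * m)
    (g := fun m => Real.exp (s * m) * Real.exp (-(s * c))) (fun m => by positivity)
    fun m hm => ?_).trans ?_
  · rw [← Real.exp_add]
    exact Real.one_le_exp (by linarith)
  · simp_rw [← mul_assoc, ← sum_mul, sum_choose_mul_pow_mul_exp]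
    gcongr
    calc (p * Real.exp s + q) ^ N * Real.exp (-(s * c))
        ≤ Real.exp (p * (s + s ^ 2)) ^ N * Real.exp (-(s * c)) := by
          gcongr
          exact mul_exp_add_le_exp hp hpq hs
      _ = Real.exp (-(s * c) + N * p * (s + s ^ 2)) := by
          rw [← Real.exp_nat_mul, ← Real.exp_add]
          ring_nf

theorem HasBinomialLaw.measure_setOf_le_le {X Y : Ω → ℕ} {A B : ℕ}
    (hX : HasBinomialLaw μ X A p q) (hY : HasBinomialLaw μ Y B p q)
    (hp : 0 ≤ p) (hq : 0 ≤ q) (hpq : p + q = 1) (hAB : A ≤ B) (hB : 0 < B) :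
    μ {ω | Y ω ≤ X ω} ≤
      ENNReal.ofReal (2 * Real.exp (-(p * ((B : ℝ) - A) ^ 2 / (16 * B)))) := by
  have hAB' : (A : ℝ) ≤ B := by exact_mod_cast hAB
  have hB' : (0 : ℝ) < B := by exact_mod_cast hB
  set d : ℝ := B - A with hd
  set c : ℝ := p * (A + B) / 2 with hc
  set t : ℝ := d / (4 * B) with ht
  have ht0 : 0 ≤ t := by positivity
  have ht1 : t ≤ 1 := by
    rw [ht, div_le_one (by positivity)]
    linarith [(Nat.cast_nonneg A : (0 : ℝ) ≤ A)]
  have hoptimal : -(t * p * d / 2) + B * p * t ^ 2 = -(p * d ^ 2 / (16 * B)) := by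
    rw [ht]
    field_simp
    ring
  have hcover :
      {ω | Y ω ≤ X ω} ⊆ {ω | t * c ≤ t * X ω} ∪ {ω | -t * c ≤ -t * Y ω} := by
    intro ω hω
    have hYX : (Y ω : ℝ) ≤ X ω := by exact_mod_cast hω
    by_cases hcX : c ≤ X ω
    · exact Or.inl (mul_le_mul_of_nonneg_left hcX ht0)
    · exact Or.inr (by simp only [Set.mem_ofPred_eq]; nlinarith)
  have hupper :
      μ {ω | t * c ≤ t * X ω} ≤ ENNReal.ofReal (Real.exp (-(p * d ^ 2 / (16 * B)))) := by
    refine (hX.measure_mul_le_mul_le hp hq hpq c (by rwa [abs_of_nonneg ht0])).trans ?_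
    have hexponent : -(t * c) + A * p * (t + t ^ 2) =
        -(t * p * d / 2) + B * p * t ^ 2 - (B - A) * p * t ^ 2 := by
      rw [hc, hd]
      ring
    gcongr
    rw [hexponent, hoptimal]
    nlinarith [mul_nonneg (mul_nonneg (sub_nonneg.2 hAB') hp) (sq_nonneg t)]
  have hlower :
      μ {ω | -t * c ≤ -t * Y ω} ≤ ENNReal.ofReal (Real.exp (-(p * d ^ 2 / (16 * B)))) := by
    refine (hY.measure_mul_le_mul_le hp hq hpq c (by rwa [abs_neg, abs_of_nonneg ht0])).trans ?_
    have hexponent : -(-t * c) + B * p * (-t + (-t) ^ 2) = -(t * p * d / 2) + B * p * t ^ 2 := by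
      rw [hc, hd]
      ring
    rw [hexponent, hoptimal]
  calc μ {ω | Y ω ≤ X ω}
      ≤ μ {ω | t * c ≤ t * X ω} + μ {ω | -t * c ≤ -t * Y ω} :=
        (measure_mono hcover).trans (measure_union_le _ _)
    _ ≤ _ := by
      rw [two_mul, ENNReal.ofReal_add (by positivity) (by positivity)]
      exact add_le_add hupper hlower

end Binomial

theorem even_mul_sub_mul_sub_two {n k : ℕ} (hk : 2 ≤ k) (hkn : k + 2 ≤ n) :
    Even (k * (n - k) * (n - 2)) := by
  simp only [Nat.even_mul, Nat.even_sub (by omega : k ≤ n), Nat.even_sub (by omega : 2 ≤ n),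
    even_two, iff_true]
  tauto

section Arithmetic

variable {n k : ℝ}

/-- The paper's lower bound `E[W'] - E[W''] ≥ (n-2)(n-3)/3`, divided by `p = 2/3`. -/
theorem sub_mul_sub_le_interior_sub_pendant (hk : 2 ≤ k) (hkn : k + 2 ≤ n) :
    (n - 2) * (n - 3) / 2 ≤ k * (n - k) * (n - 2) / 2 - (n - 1) * (n - 2) / 2 := by
  have hprod : 0 ≤ (n - 2) * (k - 2) * (n - k - 2) := by
    apply mul_nonneg (mul_nonneg _ _) _ <;> linarith
  nlinarith

theorem div_le_interior_sub_pendant_sq (hk : 2 ≤ k) (hkn : k + 2 ≤ n) :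
    n / 576 ≤ 2 / 3 * (k * (n - k) * (n - 2) / 2 - (n - 1) * (n - 2) / 2) ^ 2 /
      (16 * (k * (n - k) * (n - 2) / 2)) := by
  have hn2 : 0 ≤ n - 2 := by linarith
  have hgap := sub_mul_sub_le_interior_sub_pendant hk hkn
  have hinterior : 8 * (k * (n - k) * (n - 2) / 2) ≤ n ^ 2 * (n - 2) := by
    have : 4 * (k * (n - k)) ≤ n ^ 2 := by nlinarith [sq_nonneg (n - 2 * k)]
    nlinarith
  have hcube : n ^ 3 ≤ 48 * (n - 2) * (n - 3) ^ 2 := by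
    have hn4 : 0 ≤ n - 4 := by linarith
    nlinarith [sq_nonneg (n - 4), mul_nonneg hn4 (sq_nonneg (n - 4))]
  rw [le_div_iff₀ (by nlinarith)]
  calc n / 576 * (16 * (k * (n - k) * (n - 2) / 2))
      = n * (8 * (k * (n - k) * (n - 2) / 2)) / 288 := by ring
    _ ≤ n * (n ^ 2 * (n - 2)) / 288 := by gcongr; linarith
    _ = n ^ 3 * (n - 2) / 288 := by ring
    _ ≤ 48 * (n - 2) * (n - 3) ^ 2 * (n - 2) / 288 := by gcongr
    _ = 2 / 3 * ((n - 2) * (n - 3) / 2) ^ 2 := by ring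
    _ ≤ _ := by gcongr; nlinarith

end Arithmetic

theorem stmt4_general {Ω : Type*} [MeasureSpace Ω]
    (n k : ℕ) (hk1 : 2 ≤ k) (hk2 : k + 2 ≤ n)
    (W'' W' : Ω → ℕ)
    (hdist'' : ∀ m : ℕ, ℙ {ω | W'' ω = m} =
      ENNReal.ofReal (((n - 1).choose 2).choose m * (2 / 3 : ℝ) ^ m
        * (1 / 3 : ℝ) ^ ((n - 1).choose 2 - m)))
    (hdist' : ∀ m : ℕ, ℙ {ω | W' ω = m} =
      ENNReal.ofReal ((k * (n - k) * (n - 2) / 2).choose m * (2 / 3 : ℝ) ^ m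
        * (1 / 3 : ℝ) ^ (k * (n - k) * (n - 2) / 2 - m))) :
    ℙ {ω | W' ω ≤ W'' ω} ≤ ENNReal.ofReal (2 * Real.exp (-(n : ℝ) / 576)) := by
  have hpendant : (((n - 1).choose 2 : ℕ) : ℝ) = (n - 1) * (n - 2) / 2 := by
    rw [Nat.cast_choose_two, Nat.cast_sub (by omega)]
    ring
  have hinterior : ((k * (n - k) * (n - 2) / 2 : ℕ) : ℝ) = k * (n - k) * (n - 2) / 2 := by
    rw [Nat.cast_div (even_mul_sub_mul_sub_two hk1 hk2).two_dvd (by norm_num)]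
    push_cast [Nat.cast_sub (by omega : k ≤ n), Nat.cast_sub (by omega : 2 ≤ n)]
    ring
  have hk1' : (2 : ℝ) ≤ k := by exact_mod_cast hk1
  have hk2' : (k : ℝ) + 2 ≤ n := by exact_mod_cast hk2
  have hpendant_le : (n - 1).choose 2 ≤ k * (n - k) * (n - 2) / 2 := by
    have hgap := sub_mul_sub_le_interior_sub_pendant hk1' hk2'
    have : (((n - 1).choose 2 : ℕ) : ℝ) ≤ ((k * (n - k) * (n - 2) / 2 : ℕ) : ℝ) := by
      rw [hpendant, hinterior]
      nlinarith
    exact_mod_cast this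
  have hinterior_pos : 0 < k * (n - k) * (n - 2) / 2 := by
    have : 2 * 2 * 2 ≤ k * (n - k) * (n - 2) := by gcongr <;> omega
    omega
  refine (HasBinomialLaw.measure_setOf_le_le hdist'' hdist' (by norm_num) (by norm_num)
    (by norm_num) hpendant_le hinterior_pos).trans ?_
  rw [hpendant, hinterior, neg_div]
  exact ENNReal.ofReal_le_ofReal (mul_le_mul_of_nonneg_left
    (Real.exp_le_exp.2 (neg_le_neg (div_le_interior_sub_pendant_sq hk1' hk2'))) two_pos.le)

/-- If W'' is binomial (C(n−1,2), 2/3) (pendant-edge weight) and W' is an independent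
binomial (k(n−k)(n−2)/2, 2/3) (interior-edge weight) with 2 ≤ k ≤ n−2, then
P(W'' ≥ W') ≤ 2·exp(−n/576). -/
theorem stmt4 {Ω : Type*} [MeasureSpace Ω] [IsProbabilityMeasure (ℙ : Measure Ω)]
    (n k : ℕ) (hn : 4 ≤ n) (hk1 : 2 ≤ k) (hk2 : k + 2 ≤ n)
    (W'' W' : Ω → ℕ) (hm'' : Measurable W'') (hm' : Measurable W')
    (hindep : IndepFun W'' W' ℙ)
    (hdist'' : ∀ m : ℕ, ℙ {ω | W'' ω = m} =
      ENNReal.ofReal (((n - 1).choose 2).choose m * (2 / 3 : ℝ) ^ m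
        * (1 / 3 : ℝ) ^ ((n - 1).choose 2 - m)))
    (hdist' : ∀ m : ℕ, ℙ {ω | W' ω = m} =
      ENNReal.ofReal ((k * (n - k) * (n - 2) / 2).choose m * (2 / 3 : ℝ) ^ m
        * (1 / 3 : ℝ) ^ (k * (n - k) * (n - 2) / 2 - m))) :
    ℙ {ω | W' ω ≤ W'' ω} ≤ ENNReal.ofReal (2 * Real.exp (-(n : ℝ) / 576)) :=
  stmt4_general n k hk1 hk2 W'' W' hdist'' hdist'
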